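/- arXiv:1806.10644 — 2 statements merged into one kernel-verified Lean document; each statement's English description precedes it below -/
import Mathlib

section
/- Every continuous piecewise affine function K : ℝ^{n_x} → ℝ^{n_u} can be written componentwise as a difference of convex piecewise affine functions: there exist convex PWA functions γ_1, …, γ_{n_u} and η_1, …, η_{n_u} (each a pointwise maximum of finitely many affine functions ℝ^{n_x} → ℝ) such that K_i(x) = γ_i(x) − η_i(x) for all x ∈ ℝ^{n_x} and all i = 1, …, n_u. -/
open Finset Matrix

/-- The affine map `x ↦ W x + b`. -/
def affineMapVec {m n : ℕ} (W : Matrix (Fin m) (Fin n) ℝ) (b : Fin m → ℝ)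
    (x : Fin n → ℝ) : Fin m → ℝ :=
  fun i => (∑ j, W i j * x j) + b i

/-- Componentwise rectifier (ReLU). -/
def reluVec {n : ℕ} (v : Fin n → ℝ) : Fin n → ℝ := fun i => max 0 (v i)

/-- Parameters θ of a feed-forward ReLU network with `L ≥ 1` hidden layers of width `M`,
input dimension `nx` and output dimension `nu`:  the first hidden layer `(W1, b1)`,
the `L - 1` remaining hidden layers `(W l, b l)`, and the output layer `(Wout, bout)`. -/
structure ReLUNetParams (nx nu M L : ℕ) where
  W1 : Matrix (Fin M) (Fin nx) ℝ
  b1 : Fin M → ℝ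
  W : Fin (L - 1) → Matrix (Fin M) (Fin M) ℝ
  b : Fin (L - 1) → Fin M → ℝ
  Wout : Matrix (Fin nu) (Fin M) ℝ
  bout : Fin nu → ℝ

/-- The function `N(·; θ, M, L) = f_{L+1} ∘ g_L ∘ f_L ∘ ⋯ ∘ g_1 ∘ f_1` computed by the
ReLU network with parameters `θ`. -/
def ReLUNetParams.eval {nx nu M L : ℕ} (p : ReLUNetParams nx nu M L)
    (x : Fin nx → ℝ) : Fin nu → ℝ :=
  affineMapVec p.Wout p.bout <|
    (List.finRange (L - 1)).foldl
      (fun ξ l => reluVec (affineMapVec (p.W l) (p.b l) ξ))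
      (reluVec (affineMapVec p.W1 p.b1 x))

/-- A polyhedron `{x | Z x ≤ z}`. -/
def IsPolyhedron {n : ℕ} (S : Set (Fin n → ℝ)) : Prop :=
  ∃ (m : ℕ) (Z : Matrix (Fin m) (Fin n) ℝ) (z : Fin m → ℝ),
    S = {x | ∀ i, (∑ j, Z i j * x j) ≤ z i}

/-- `f` is piecewise affine on `D`: finitely many polyhedra with pairwise disjoint
interiors whose union is `D`, with `f` affine on each. -/
def IsPWAOn {n m : ℕ} (D : Set (Fin n → ℝ)) (f : (Fin n → ℝ) → Fin m → ℝ) : Prop :=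
  ∃ (r : ℕ) (R : Fin r → Set (Fin n → ℝ))
    (K : Fin r → Matrix (Fin m) (Fin n) ℝ) (g : Fin r → Fin m → ℝ),
    (∀ i, IsPolyhedron (R i)) ∧
    (∀ i j, i ≠ j → interior (R i) ∩ interior (R j) = ∅) ∧
    (⋃ i, R i) = D ∧
    (∀ i, ∀ x ∈ R i, f x = affineMapVec (K i) (g i) x)

/-- Scalar-valued piecewise affine function on `D`. -/
def IsPWAOnScalar {n : ℕ} (D : Set (Fin n → ℝ)) (f : (Fin n → ℝ) → ℝ) : Prop :=
  ∃ (r : ℕ) (R : Fin r → Set (Fin n → ℝ)) (a : Fin r → Fin n → ℝ) (c : Fin r → ℝ),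
    (∀ i, IsPolyhedron (R i)) ∧
    (∀ i j, i ≠ j → interior (R i) ∩ interior (R j) = ∅) ∧
    (⋃ i, R i) = D ∧
    (∀ i, ∀ x ∈ R i, f x = (∑ j, a i j * x j) + c i)

/-- `f` agrees with some affine function on the set `S`. -/
def AffineOnSet {n m : ℕ} (f : (Fin n → ℝ) → Fin m → ℝ) (S : Set (Fin n → ℝ)) : Prop :=
  ∃ (A : Matrix (Fin m) (Fin n) ℝ) (b : Fin m → ℝ), ∀ x ∈ S, f x = affineMapVec A b x

/-- A linear region of `f`: a nonempty open connected set on which `f` is affine,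
maximal with this property. -/
def IsLinearRegion {n m : ℕ} (f : (Fin n → ℝ) → Fin m → ℝ) (S : Set (Fin n → ℝ)) : Prop :=
  S.Nonempty ∧ IsOpen S ∧ IsConnected S ∧ AffineOnSet f S ∧
    ∀ S', IsOpen S' → IsConnected S' → S ⊂ S' → ¬ AffineOnSet f S'

/-- Maximum of a nonempty finite family of reals. -/
noncomputable def finMax {N : ℕ} (hN : 0 < N) (g : Fin N → ℝ) : ℝ :=
  Finset.univ.sup' (Finset.univ_nonempty_iff.mpr (Fin.pos_iff_nonempty.mp hN)) g

/-- The unit hypercube `[0,1]^n`. -/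
def unitCube (n : ℕ) : Set (Fin n → ℝ) := {x | ∀ i, 0 ≤ x i ∧ x i ≤ 1}

/-!
Let `ℓ₁, …, ℓᵣ` be the affine pieces of a component `f` of `K`, `η = ∑_{p,q} max ℓ_p ℓ_q` and
`γ = f + η`, so that `f = γ - η` and `η` is a maximum of finitely many affine maps. Along a line
through `x`, `f` agrees with one piece `ℓⱼ` just before `x` and with one piece `ℓₖ` just after it
(two affine functions of one variable agree near `0⁺` or nowhere near `0⁺`). The concave kink
this may create is compensated by the convex kink of `max ℓⱼ ℓₖ`, so
`2 γ x ≤ γ (x - s v) + γ (x + s v)` for small `s > 0`, and a maximum principle on segments makes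
`γ` convex. At a point `x` interior to `{f = ℓₖ}`, the affine map `ℓₖ + b`, with `b` a term of
`η` maximal at `x`, supports `γ` near `x`, hence everywhere by convexity. Such points are dense by
Baire's theorem, so `γ` is the maximum of the finitely many affine maps obtained this way.
-/

open Filter Topology
open scoped Pointwise

theorem IsPreconnected.exists_eqOn_of_forall_exists_eq {X Y ι : Type*} [TopologicalSpace X]
    [TopologicalSpace Y] [T2Space Y] [Finite ι] {S : Set X} (hS : IsPreconnected S)
    (hne : S.Nonempty) {F : X → Y} (hF : Continuous F) {ℓ : ι → X → Y}
    (hℓ : ∀ k, Continuous (ℓ k)) (hcover : ∀ x ∈ S, ∃ k, F x = ℓ k x)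
    (hcross : ∀ j k, ∀ x ∈ S, ∀ y ∈ S, ℓ j x = ℓ k x → ℓ j y = ℓ k y) :
    ∃ k, Set.EqOn F (ℓ k) S := by
  obtain ⟨x, hx⟩ := hne
  obtain ⟨k, hk⟩ := hcover x hx
  refine ⟨k, fun y hy => by_contra fun hFy => ?_⟩
  -- `S` is covered by two closed sets that cannot meet on `S`, and `y` lies in the second
  let J : Set ι := {j | ℓ j x ≠ ℓ k x}
  have hclosed : ∀ j, IsClosed {z | F z = ℓ j z} := fun j => isClosed_eq hF (hℓ j)
  have hsub : S ⊆ {z | F z = ℓ k z} ∪ ⋃ j ∈ J, {z | F z = ℓ j z} := by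
    intro z hz
    obtain ⟨j, hj⟩ := hcover z hz
    by_cases hjJ : j ∈ J
    · exact Or.inr (Set.mem_biUnion hjJ hj)
    · exact Or.inl (hj.trans (hcross j k x hx z hz (not_not.1 hjJ)))
  obtain ⟨z, hz, hzk, hzJ⟩ := isPreconnected_closed_iff.1 hS _ _ (hclosed k)
    (J.toFinite.isClosed_biUnion fun j _ => hclosed j) hsub ⟨x, hx, hk⟩
    ⟨y, hy, (hsub hy).resolve_left hFy⟩
  obtain ⟨j, hj, hzj⟩ := Set.mem_iUnion₂.1 hzJ
  exact hj (hcross j k z hz x hx (hzj.symm.trans hzk))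

theorem exists_eq_and_eventually_eq_nhdsGT {ι : Type*} [Finite ι] {F : ℝ → ℝ}
    (hF : Continuous F) {ℓ : ι → ℝ → ℝ} (hℓ : ∀ k, Continuous (ℓ k))
    (hℓ₀ : ∀ k, AnalyticAt ℝ (ℓ k) 0) (hcover : ∀ t, ∃ k, F t = ℓ k t) :
    ∃ k, F 0 = ℓ k 0 ∧ ∀ᶠ t in 𝓝[>] 0, F t = ℓ k t := by
  -- by the isolated zeros principle, whether two pieces agree is constant just right of `0`
  have hsep : ∀ j k, ∃ c : Prop, ∀ᶠ t in 𝓝[>] (0 : ℝ), (ℓ j t = ℓ k t ↔ c) := by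
    intro j k
    rcases (hℓ₀ j).eventually_eq_or_eventually_ne (hℓ₀ k) with h | h
    · exact ⟨True, (h.filter_mono nhdsWithin_le_nhds).mono fun t ht => iff_true_intro ht⟩
    · exact ⟨False, (h.filter_mono (nhdsWithin_mono _ fun t (ht : 0 < t) => ht.ne')).mono
        fun t ht => iff_false_intro ht⟩
  choose c hc using hsep
  have hall : ∀ᶠ t in 𝓝[>] (0 : ℝ), ∀ j k, (ℓ j t = ℓ k t ↔ c j k) := by
    simpa only [eventually_all] using hc
  obtain ⟨ε, hε, hsub⟩ := mem_nhdsGT_iff_exists_Ioo_subset.1 hall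
  obtain ⟨k, hk⟩ := isPreconnected_Ioo.exists_eqOn_of_forall_exists_eq (Set.nonempty_Ioo.2 hε)
    hF hℓ (fun t _ => hcover t) fun j k t ht t' ht' h => (hsub ht' j k).2 ((hsub ht j k).1 h)
  refine ⟨k, hk.closure hF (hℓ k) ?_, mem_of_superset (Ioo_mem_nhdsGT hε) hk⟩
  rw [closure_Ioo (ne_of_lt hε)]
  exact ⟨le_rfl, le_of_lt hε⟩

theorem le_max_of_forall_eventually_two_mul_le {G : ℝ → ℝ} (hG : Continuous G)
    (hmid : ∀ t, ∀ᶠ s in 𝓝[>] 0, 2 * G t ≤ G (t - s) + G (t + s)) {a b t : ℝ}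
    (ht : t ∈ Set.Icc a b) : G t ≤ max (G a) (G b) := by
  by_contra! hlt
  obtain ⟨m, hm, hmax⟩ := isCompact_Icc.exists_isMaxOn (Set.nonempty_Icc.2 (ht.1.trans ht.2))
    hG.continuousOn
  -- the rightmost maximiser
  obtain ⟨t₁, ⟨ht₁, hGt₁ : G t₁ = G m⟩, hright⟩ :=
    (isCompact_Icc.inter_right (isClosed_singleton.preimage hG)).exists_isGreatest
      (⟨m, hm, rfl⟩ : (Set.Icc a b ∩ G ⁻¹' {G m}).Nonempty)
  have hM : max (G a) (G b) < G t₁ := hGt₁ ▸ hlt.trans_le (hmax ht)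
  have ha : a < t₁ := ht₁.1.lt_of_ne (by rintro rfl; exact (le_max_left _ _).not_gt hM)
  have hb : t₁ < b := ht₁.2.lt_of_ne (by rintro rfl; exact (le_max_right _ _).not_gt hM)
  obtain ⟨s, hs, hs₀, hsδ⟩ := ((hmid t₁).and
    (Ioo_mem_nhdsGT (lt_min (sub_pos.2 ha) (sub_pos.2 hb)))).exists
  have hsa := hsδ.trans_le (min_le_left _ _)
  have hsb := hsδ.trans_le (min_le_right _ _)
  have hleft : G (t₁ - s) ≤ G t₁ := hGt₁ ▸ hmax ⟨by linarith, by linarith⟩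
  have hright' : G (t₁ + s) < G t₁ := by
    refine lt_of_le_of_ne (hGt₁ ▸ hmax ⟨by linarith, by linarith⟩) fun h => ?_
    have := hright ⟨⟨by linarith, by linarith⟩, h.trans hGt₁⟩
    linarith
  linarith

section

variable {E : Type*} [NormedAddCommGroup E] [NormedSpace ℝ E]

theorem AffineMap.apply_add (ℓ : E →ᵃ[ℝ] ℝ) (x w : E) : ℓ (x + w) = ℓ.linear w + ℓ x := by
  rw [add_comm]; exact ℓ.map_vadd x w

theorem AffineMap.apply_sub_add_apply_add (ℓ : E →ᵃ[ℝ] ℝ) (x w : E) :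
    ℓ (x - w) + ℓ (x + w) = 2 * ℓ x := by
  rw [sub_eq_add_neg, ℓ.apply_add, ℓ.apply_add, map_neg]
  ring

theorem AffineMap.concaveOn_univ (ℓ : E →ᵃ[ℝ] ℝ) : ConcaveOn ℝ Set.univ ℓ :=
  ⟨convex_univ, fun _ _ _ _ _ _ _ _ hab => (Convex.combo_affine_apply hab).ge⟩

theorem convexOn_univ_of_forall_eventually_two_mul_le {γ : E → ℝ} (hγ : Continuous γ)
    (hmid : ∀ x v, ∀ᶠ s in 𝓝[>] (0 : ℝ), 2 * γ x ≤ γ (x - s • v) + γ (x + s • v)) :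
    ConvexOn ℝ Set.univ γ := by
  refine ⟨convex_univ, fun x _ y _ a b ha hb hab => ?_⟩
  let D : ℝ → ℝ := fun t => γ (x + t • (y - x)) - ((1 - t) * γ x + t * γ y)
  have hDmid : ∀ t, ∀ᶠ s in 𝓝[>] 0, 2 * D t ≤ D (t - s) + D (t + s) := fun t =>
    (hmid (x + t • (y - x)) (y - x)).mono fun s hs => by
      simp only [D, sub_smul, add_smul, ← add_sub_assoc, ← add_assoc] at hs ⊢
      linarith
  have hD := le_max_of_forall_eventually_two_mul_le (by fun_prop) hDmid
    (⟨hb, by linarith⟩ : b ∈ Set.Icc (0 : ℝ) 1)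
  obtain rfl : a = 1 - b := eq_sub_of_add_eq hab
  simp only [D, zero_smul, add_zero, one_smul, add_sub_cancel, sub_zero, zero_mul, one_mul,
    zero_add, sub_self, max_self] at hD
  have hcomb : (1 - b) • x + b • y = x + b • (y - x) := by
    rw [smul_sub, sub_smul, one_smul]; abel
  rw [hcomb, smul_eq_mul, smul_eq_mul]
  linarith

theorem ConvexOn.le_of_eventually_le_of_eq {γ : E → ℝ} (hγ : ConvexOn ℝ Set.univ γ)
    {ℓ : E →ᵃ[ℝ] ℝ} {x : E} (hle : ∀ᶠ z in 𝓝 x, ℓ z ≤ γ z) (heq : ℓ x = γ x) (y : E) :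
    ℓ y ≤ γ y := by
  have hmin : IsLocalMin (γ - ⇑ℓ) x := hle.mono fun z hz => by
    simp only [Pi.sub_apply, heq, sub_self]; linarith
  have := IsMinOn.of_isLocalMin_of_convex_univ hmin (hγ.sub ℓ.concaveOn_univ) y
  simp only [Pi.sub_apply, heq, sub_self] at this
  linarith

theorem exists_eq_and_eventually_eq_along_ray {ι : Type*} [Finite ι] {f : E → ℝ}
    (hf : Continuous f) {ℓ : ι → E →ᵃ[ℝ] ℝ} (hcover : ∀ x, ∃ k, f x = ℓ k x) (x v : E) :
    ∃ k, f x = ℓ k x ∧ ∀ᶠ t in 𝓝[>] (0 : ℝ), f (x + t • v) = ℓ k (x + t • v) := by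
  have hline : ∀ k, (fun t : ℝ => ℓ k (x + t • v)) = fun t => t * (ℓ k).linear v + ℓ k x :=
    fun k => funext fun t => by rw [(ℓ k).apply_add, map_smul, smul_eq_mul]
  simpa using exists_eq_and_eventually_eq_nhdsGT (F := fun t => f (x + t • v))
    (ℓ := fun k t => ℓ k (x + t • v)) (by fun_prop) (fun k => by rw [hline]; fun_prop)
    (fun k => by rw [hline]; fun_prop) fun t => hcover _

theorem two_mul_max_le_max_add_max (ℓ₁ ℓ₂ : E →ᵃ[ℝ] ℝ) (x w : E) :
    2 * max (ℓ₁ x) (ℓ₂ x) ≤ max (ℓ₁ (x - w)) (ℓ₂ (x - w)) + max (ℓ₁ (x + w)) (ℓ₂ (x + w)) := by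
  have h₁ := ℓ₁.apply_sub_add_apply_add x w
  have h₂ := ℓ₂.apply_sub_add_apply_add x w
  rcases le_total (ℓ₁ x) (ℓ₂ x) with h | h
  · rw [max_eq_right h]
    linarith [le_max_right (ℓ₁ (x - w)) (ℓ₂ (x - w)), le_max_right (ℓ₁ (x + w)) (ℓ₂ (x + w))]
  · rw [max_eq_left h]
    linarith [le_max_left (ℓ₁ (x - w)) (ℓ₂ (x - w)), le_max_left (ℓ₁ (x + w)) (ℓ₂ (x + w))]

def sumPairwiseMax {ι : Type*} [Fintype ι] (ℓ : ι → E →ᵃ[ℝ] ℝ) (x : E) : ℝ :=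
  ∑ p : ι × ι, max (ℓ p.1 x) (ℓ p.2 x)

theorem eventually_two_mul_le_add_sumPairwiseMax {ι : Type*} [Fintype ι] {f : E → ℝ}
    (hf : Continuous f) {ℓ : ι → E →ᵃ[ℝ] ℝ} (hcover : ∀ x, ∃ k, f x = ℓ k x) (x v : E) :
    ∀ᶠ s in 𝓝[>] (0 : ℝ), 2 * (f x + sumPairwiseMax ℓ x) ≤
      (f (x - s • v) + sumPairwiseMax ℓ (x - s • v)) +
        (f (x + s • v) + sumPairwiseMax ℓ (x + s • v)) := by
  obtain ⟨k, hxk, hk⟩ := exists_eq_and_eventually_eq_along_ray hf hcover x v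
  obtain ⟨j, hxj, hj⟩ := exists_eq_and_eventually_eq_along_ray hf hcover x (-v)
  filter_upwards [hk, hj] with s hsk hsj
  rw [smul_neg, ← sub_eq_add_neg] at hsj
  set w := s • v
  let m : ι × ι → E → ℝ := fun p z => max (ℓ p.1 z) (ℓ p.2 z)
  -- the kink of `f` at `x`, from piece `j` to piece `k`, is paid for by the term `max ℓ_j ℓ_k`
  have hjk : 2 * f x + 2 * m (j, k) x ≤
      f (x - w) + f (x + w) + m (j, k) (x - w) + m (j, k) (x + w) := by
    have hmx : m (j, k) x = f x := by simp [m, ← hxj, ← hxk]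
    have := (ℓ j).apply_sub_add_apply_add x w
    have := (ℓ k).apply_sub_add_apply_add x w
    linarith [le_max_right (ℓ j (x - w)) (ℓ k (x - w)), le_max_left (ℓ j (x + w)) (ℓ k (x + w))]
  have hsum : m (j, k) (x - w) + m (j, k) (x + w) - 2 * m (j, k) x ≤
      ∑ p, (m p (x - w) + m p (x + w) - 2 * m p x) :=
    single_le_sum (f := fun p => m p (x - w) + m p (x + w) - 2 * m p x)
      (fun p _ => by linarith [two_mul_max_le_max_add_max (ℓ p.1) (ℓ p.2) x w]) (mem_univ _)
  simp only [sum_sub_distrib, sum_add_distrib, ← mul_sum] at hsum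
  simp only [sumPairwiseMax]
  linarith

def IsMaxAffine (g : E → ℝ) : Prop :=
  ∃ (s : Finset (E →ᵃ[ℝ] ℝ)) (hs : s.Nonempty), ∀ x, g x = s.sup' hs (· x)

theorem isMaxAffine_zero : IsMaxAffine (0 : E → ℝ) :=
  ⟨{0}, singleton_nonempty _, fun x => by simp⟩

theorem isMaxAffine_max (ℓ₁ ℓ₂ : E →ᵃ[ℝ] ℝ) : IsMaxAffine fun x => max (ℓ₁ x) (ℓ₂ x) := by
  classical
  exact ⟨{ℓ₁, ℓ₂}, insert_nonempty _ _, fun x => by simp⟩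

theorem IsMaxAffine.add {g₁ g₂ : E → ℝ} (h₁ : IsMaxAffine g₁) (h₂ : IsMaxAffine g₂) :
    IsMaxAffine (g₁ + g₂) := by
  classical
  obtain ⟨s, hs, hg₁⟩ := h₁
  obtain ⟨t, ht, hg₂⟩ := h₂
  refine ⟨s + t, hs.add ht, fun x => le_antisymm ?_ ?_⟩
  · obtain ⟨a, ha, hax⟩ := exists_mem_eq_sup' hs (· x)
    obtain ⟨b, hb, hbx⟩ := exists_mem_eq_sup' ht (· x)
    simp only [Pi.add_apply, hg₁, hg₂, hax, hbx]
    exact le_sup'_of_le (· x) (add_mem_add ha hb) le_rfl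
  · refine sup'_le _ _ fun c hc => ?_
    obtain ⟨a, ha, b, hb, rfl⟩ := Finset.mem_add.1 hc
    simp only [Pi.add_apply, hg₁, hg₂, AffineMap.coe_add]
    exact add_le_add (le_sup' (· x) ha) (le_sup' (· x) hb)

theorem isMaxAffine_sumPairwiseMax {ι : Type*} [Fintype ι] (ℓ : ι → E →ᵃ[ℝ] ℝ) :
    IsMaxAffine (sumPairwiseMax ℓ) := by
  have : sumPairwiseMax ℓ = ∑ p : ι × ι, fun x => max (ℓ p.1 x) (ℓ p.2 x) := by
    ext x; simp [sumPairwiseMax]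
  rw [this]
  exact sum_induction _ IsMaxAffine (fun _ _ => IsMaxAffine.add) isMaxAffine_zero
    fun p _ => isMaxAffine_max (ℓ p.1) (ℓ p.2)

theorem IsMaxAffine.continuous [FiniteDimensional ℝ E] {g : E → ℝ} (hg : IsMaxAffine g) :
    Continuous g := by
  obtain ⟨s, hs, hg⟩ := hg
  rw [funext hg]
  exact Continuous.finset_sup'_apply hs fun ℓ _ => ℓ.continuous_of_finiteDimensional

theorem ConvexOn.isMaxAffine_of_dense [FiniteDimensional ℝ E] {γ : E → ℝ}
    (hγ : ConvexOn ℝ Set.univ γ) (hγc : Continuous γ) (C : Finset (E →ᵃ[ℝ] ℝ)) {U : Set E}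
    (hU : Dense U) (htouch : ∀ x ∈ U, ∃ ℓ ∈ C, (∀ᶠ z in 𝓝 x, ℓ z ≤ γ z) ∧ ℓ x = γ x) :
    IsMaxAffine γ := by
  classical
  let C' := C.filter fun ℓ => ∀ y, ℓ y ≤ γ y
  have htouch' : ∀ x ∈ U, ∃ ℓ ∈ C', ℓ x = γ x := fun x hx =>
    let ⟨ℓ, hℓ, hle, heq⟩ := htouch x hx
    ⟨ℓ, mem_filter.2 ⟨hℓ, hγ.le_of_eventually_le_of_eq hle heq⟩, heq⟩
  obtain ⟨ℓ₀, hℓ₀, -⟩ := htouch' _ hU.nonempty.some_mem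
  refine ⟨C', ⟨ℓ₀, hℓ₀⟩, congrFun (hγc.ext_on hU (Continuous.finset_sup'_apply _
    fun ℓ _ => ℓ.continuous_of_finiteDimensional) fun x hx => ?_)⟩
  obtain ⟨ℓ, hℓ, heq⟩ := htouch' x hx
  exact le_antisymm (heq ▸ le_sup' (· x) hℓ) (sup'_le _ _ fun ℓ hℓ => (mem_filter.1 hℓ).2 x)

theorem isMaxAffine_add_of_convexOn [FiniteDimensional ℝ E] {ι : Type*} [Fintype ι]
    {f : E → ℝ} (hf : Continuous f) {ℓ : ι → E →ᵃ[ℝ] ℝ} (hcover : ∀ x, ∃ k, f x = ℓ k x)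
    {η : E → ℝ} (hη : IsMaxAffine η) (hconv : ConvexOn ℝ Set.univ (f + η)) :
    IsMaxAffine (f + η) := by
  classical
  obtain ⟨T, hT, hηT⟩ := hη
  have hU : Dense (⋃ k, interior {x | f x = ℓ k x}) :=
    dense_iUnion_interior_of_closed (fun k => isClosed_eq hf (ℓ k).continuous_of_finiteDimensional)
      (Set.iUnion_eq_univ_iff.2 hcover)
  refine hconv.isMaxAffine_of_dense (hf.add (IsMaxAffine.continuous ⟨T, hT, hηT⟩))
    (univ.image ℓ + T) hU fun x hx => ?_
  obtain ⟨k, hk⟩ := Set.mem_iUnion.1 hx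
  obtain ⟨b, hb, hbx⟩ := exists_mem_eq_sup' hT (· x)
  refine ⟨ℓ k + b, add_mem_add (mem_image_of_mem _ (mem_univ k)) hb, ?_, ?_⟩
  · filter_upwards [mem_interior_iff_mem_nhds.1 hk] with z (hz : f z = ℓ k z)
    simp only [AffineMap.coe_add, Pi.add_apply, hηT, hz]
    exact add_le_add le_rfl (le_sup' (· z) hb)
  · have hxk : f x = ℓ k x := interior_subset (s := {z | f z = ℓ k z}) hk
    simp [hηT, hbx, hxk]

theorem exists_isMaxAffine_sub_isMaxAffine [FiniteDimensional ℝ E] {ι : Type*} [Fintype ι]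
    {f : E → ℝ} (hf : Continuous f) {ℓ : ι → E →ᵃ[ℝ] ℝ} (hcover : ∀ x, ∃ k, f x = ℓ k x) :
    ∃ γ η : E → ℝ, IsMaxAffine γ ∧ IsMaxAffine η ∧ f = γ - η := by
  have hη := isMaxAffine_sumPairwiseMax ℓ
  have hconv : ConvexOn ℝ Set.univ (f + sumPairwiseMax ℓ) :=
    convexOn_univ_of_forall_eventually_two_mul_le (hf.add hη.continuous)
      (eventually_two_mul_le_add_sumPairwiseMax hf hcover)
  exact ⟨_, _, isMaxAffine_add_of_convexOn hf hcover hη hconv, hη, (add_sub_cancel_right _ _).symm⟩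

end

theorem AffineMap.apply_eq_sum_mul_add {n : ℕ} (ℓ : (Fin n → ℝ) →ᵃ[ℝ] ℝ) (x : Fin n → ℝ) :
    ℓ x = ∑ j, ℓ.linear (Pi.single j 1) * x j + ℓ 0 := by
  rw [congrFun ℓ.decomp x, Pi.add_apply, ℓ.linear.pi_apply_eq_sum_univ x]
  congr 1
  refine sum_congr rfl fun j _ => ?_
  rw [smul_eq_mul, mul_comm]
  congr 2
  ext k
  simp [Pi.single_apply, eq_comm]

theorem exists_affineMap_eq_affineMapVec_apply {m n : ℕ} (W : Matrix (Fin m) (Fin n) ℝ)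
    (b : Fin m → ℝ) (i : Fin m) :
    ∃ ℓ : (Fin n → ℝ) →ᵃ[ℝ] ℝ, ∀ x, affineMapVec W b x i = ℓ x :=
  ⟨(LinearMap.proj i ∘ₗ Matrix.toLin' W).toAffineMap + AffineMap.const ℝ _ (b i), fun x => by
    simp [affineMapVec, Matrix.mulVec, dotProduct]⟩

theorem IsMaxAffine.exists_eq_finMax {n : ℕ} {g : (Fin n → ℝ) → ℝ} (hg : IsMaxAffine g) :
    ∃ (N : ℕ) (a : Fin (N + 1) → Fin n → ℝ) (c : Fin (N + 1) → ℝ),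
      ∀ x, g x = finMax (Nat.succ_pos N) (fun t => (∑ j, a t j * x j) + c t) := by
  obtain ⟨s, hs, hg⟩ := hg
  obtain ⟨N, hN⟩ := Nat.exists_eq_add_one_of_ne_zero (card_pos.2 hs).ne'
  let e : Fin (N + 1) ≃ s := (s.equivFinOfCardEq hN).symm
  refine ⟨N, fun t j => (e t).1.linear (Pi.single j 1), fun t => (e t).1 0, fun x => ?_⟩
  simp only [finMax, ← AffineMap.apply_eq_sum_mul_add, hg]
  exact le_antisymm
    (sup'_le _ _ fun ℓ hℓ => le_sup'_of_le _ (mem_univ (e.symm ⟨ℓ, hℓ⟩)) (by simp))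
    (sup'_le _ _ fun t _ => le_sup' (· x) (e t).2)

/-- every continuous PWA map ℝ^{nx} → ℝ^{nu} is, componentwise, a difference
of convex PWA functions (pointwise maxima of finitely many affine functions). -/
theorem pwa_componentwise_dc_decomposition (nx nu : ℕ) (K : (Fin nx → ℝ) → Fin nu → ℝ)
    (hcont : Continuous K) (hpwa : IsPWAOn Set.univ K) :
    ∃ (rγ rη : Fin nu → ℕ)
      (aγ : ∀ i, Fin (rγ i + 1) → Fin nx → ℝ) (cγ : ∀ i, Fin (rγ i + 1) → ℝ)
      (aη : ∀ i, Fin (rη i + 1) → Fin nx → ℝ) (cη : ∀ i, Fin (rη i + 1) → ℝ),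
      ∀ x, ∀ i, K x i =
        finMax (Nat.succ_pos (rγ i)) (fun t => (∑ j, aγ i t j * x j) + cγ i t) -
        finMax (Nat.succ_pos (rη i)) (fun t => (∑ j, aη i t j * x j) + cη i t) := by
  obtain ⟨r, R, W, b, -, -, hunion, hpiece⟩ := hpwa
  choose ℓ hℓ using fun k => exists_affineMap_eq_affineMapVec_apply (W k) (b k)
  have hdc : ∀ i, ∃ γ η : (Fin nx → ℝ) → ℝ,
      IsMaxAffine γ ∧ IsMaxAffine η ∧ (fun x => K x i) = γ - η := fun i => by
    refine exists_isMaxAffine_sub_isMaxAffine ((continuous_apply i).comp hcont)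
      (ℓ := fun k => ℓ k i) fun x => ?_
    obtain ⟨k, hk⟩ := Set.mem_iUnion.1 (hunion ▸ Set.mem_univ x)
    exact ⟨k, by rw [hpiece k x hk, hℓ]⟩
  choose γ η hγ hη hK using hdc
  choose rγ aγ cγ hγ' using fun i => (hγ i).exists_eq_finMax
  choose rη aη cη hη' using fun i => (hη i).exists_eq_finMax
  exact ⟨rγ, rη, aγ, cγ, aη, cη, fun x i => by rw [← hγ' i x, ← hη' i x]; exact congrFun (hK i) x⟩
end

section
/- Fix n_x ≥ 1, n_u ≥ 1, and a width M with M ≥ 2 n_x. For every constant C > 0 there exists a depth L ≥ 1 and parameters θ such that the number of linear regions of the ReLU network N(·;θ,M,L) : ℝ^{n_x} → ℝ^{n_u} exceeds C times its number of parameters (n_x+1)M + (L−1)(M+1)M + (M+1)n_u; that is, the maximal number of linear regions grows exponentially in the depth L while the number of parameters grows only linearly in L. -/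
open Finset Matrix

/-!
Two ReLU neurons compute the tent map `t s = 2 relu s - 4 relu (s - 1/2)`, so a network of
width `M ≥ 2` and depth `L` whose layers all have rank one computes `x ↦ t^[L] (x 0)`.
On each dyadic interval `[k / 2^L, (k + 1) / 2^L]` the sawtooth `t^[L]` is affine with slope
`± 2^L`, and at the endpoints it takes the extreme values `0` or `1` of its range `[0, 1]`, so it
is not affine across any of them. Hence the `2^L` slabs `k / 2^L < x 0 < (k + 1) / 2^L` are
linear regions, whereas the number of parameters grows only linearly in `L`.
-/

open Set Filter Topology Function

theorem affineMapVec_vecMulVec {m n : ℕ} (u b : Fin m → ℝ) (v x : Fin n → ℝ) :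
    affineMapVec (vecMulVec u v) b x = (v ⬝ᵥ x) • u + b := by
  ext i
  simp only [affineMapVec, vecMulVec_apply, dotProduct, Pi.add_apply, Pi.smul_apply, smul_eq_mul,
    Finset.sum_mul]
  congr 1
  exact Finset.sum_congr rfl fun _ _ => by ring

noncomputable def ReLUNetParams.rankOne {nx nu M L : ℕ} (v : Fin nx → ℝ) (u b c : Fin M → ℝ) :
    ReLUNetParams nx nu M L where
  W1 := vecMulVec u v
  b1 := b
  W _ := vecMulVec u c
  b _ := b
  Wout := vecMulVec 1 c
  bout := 0

theorem ReLUNetParams.eval_rankOne {nx nu M L : ℕ} (v : Fin nx → ℝ) (u b c : Fin M → ℝ)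
    (x : Fin nx → ℝ) :
    (rankOne v u b c : ReLUNetParams nx nu M (L + 1)).eval x =
      fun _ => (fun s => c ⬝ᵥ reluVec (s • u + b))^[L + 1] (v ⬝ᵥ x) := by
  set φ := fun s : ℝ => c ⬝ᵥ reluVec (s • u + b)
  have hlayer : Semiconj (fun s => reluVec (s • u + b)) φ
      (fun ξ => reluVec ((c ⬝ᵥ ξ) • u + b)) := fun _ => rfl
  ext
  simp only [eval, rankOne, List.foldl_const, List.length_finRange, affineMapVec_vecMulVec,
    Nat.add_sub_cancel]
  rw [← hlayer.iterate_right L (v ⬝ᵥ x), iterate_succ_apply' φ]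
  simp [φ]

def IsLocallyAffineAt (g : ℝ → ℝ) (p : ℝ) : Prop :=
  ∃ α β : ℝ, g =ᶠ[𝓝 p] fun s => α * s + β

theorem AffineOnSet.isLocallyAffineAt_ridge {n m : ℕ} {g : ℝ → ℝ} {i : Fin n} (u : Fin m)
    {S : Set (Fin n → ℝ)} (h : AffineOnSet (fun x (_ : Fin m) => g (x i)) S) {p : Fin n → ℝ}
    (hp : S ∈ 𝓝 p) : IsLocallyAffineAt g (p i) := by
  obtain ⟨A, c, hA⟩ := h
  have hline : Tendsto (fun s => update p i s) (𝓝 (p i)) (𝓝 p) := by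
    simpa using ((continuous_const (y := p)).update i continuous_id).tendsto (p i)
  refine ⟨A u i, A u ⬝ᵥ (p - Pi.single i (p i)) + c u, ?_⟩
  filter_upwards [hline hp] with s hs
  have := congrFun (hA _ hs) u
  simp only [affineMapVec, update_self] at this
  rw [this]
  change A u ⬝ᵥ update p i s + c u = _
  rw [Pi.update_eq_sub_add_single, dotProduct_add, dotProduct_single]
  ring

theorem isLinearRegion_ridge {n m : ℕ} (i : Fin n) (u : Fin m) {g : ℝ → ℝ} {a b α β : ℝ}
    (hab : a < b) (hg : EqOn g (fun s => α * s + β) (Set.Ioo a b))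
    (ha : ¬ IsLocallyAffineAt g a) (hb : ¬ IsLocallyAffineAt g b) :
    IsLinearRegion (fun x (_ : Fin m) => g (x i)) ((fun x => x i) ⁻¹' Set.Ioo a b) := by
  set S := (fun x : Fin n → ℝ => x i) ⁻¹' Set.Ioo a b
  have hcont : Continuous fun x : Fin n → ℝ => x i := continuous_apply i
  have hopen : IsOpen S := isOpen_Ioo.preimage hcont
  obtain ⟨c, hc⟩ := Set.nonempty_Ioo.mpr hab
  have hne : S.Nonempty := ⟨fun _ => c, hc⟩
  have hconv : Convex ℝ S :=
    (convex_Ioo a b).linear_preimage (LinearMap.proj (R := ℝ) (φ := fun _ : Fin n => ℝ) i)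
  refine ⟨hne, hopen, ⟨hne, hconv.isPreconnected⟩,
    ⟨vecMulVec 1 (Pi.single i α), fun _ => β, fun x hx => ?_⟩, ?_⟩
  · ext
    rw [affineMapVec_vecMulVec, single_dotProduct]
    simpa using hg hx
  rintro S' hS'o hS'c ⟨hsub, hnsub⟩ hS'
  obtain ⟨p, ⟨hpcl, hpS'⟩, hpS⟩ : ∃ p ∈ closure S ∩ S', p ∉ S :=
    not_subset.mp fun h => hnsub (hS'c.isPreconnected.subset_of_closure_inter_subset hopen
      (by rwa [inter_eq_right.mpr hsub]) h)
  have hp : p i ∈ ({a, b} : Set ℝ) := by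
    rw [← frontier_Ioo hab]
    exact hcont.frontier_preimage_subset _ (hopen.frontier_eq ▸ ⟨hpcl, hpS⟩)
  have hloc := hS'.isLocallyAffineAt_ridge u (hS'o.mem_nhds hpS')
  rcases hp with hp | hp
  · exact ha (hp ▸ hloc)
  · exact hb (hp ▸ hloc)

noncomputable def tent (s : ℝ) : ℝ := 2 * max 0 s - 4 * max 0 (s - 1 / 2)

theorem tent_of_nonpos {s : ℝ} (hs : s ≤ 0) : tent s = 0 := by
  rw [tent, max_eq_left hs, max_eq_left (by linarith)]; ring

theorem tent_of_le_half {s : ℝ} (h₀ : 0 ≤ s) (h₁ : s ≤ 1 / 2) : tent s = 2 * s := by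
  rw [tent, max_eq_right h₀, max_eq_left (by linarith)]; ring

theorem tent_of_half_le {s : ℝ} (h : 1 / 2 ≤ s) : tent s = 2 - 2 * s := by
  rw [tent, max_eq_right (by linarith), max_eq_right (by linarith)]; ring

theorem tent_le_one (s : ℝ) : tent s ≤ 1 := by
  rcases le_total s 0 with h₀ | h₀
  · rw [tent_of_nonpos h₀]; norm_num
  rcases le_total s (1 / 2) with h₁ | h₁
  · rw [tent_of_le_half h₀ h₁]; linarith
  · rw [tent_of_half_le h₁]; linarith

theorem tent_nonneg {s : ℝ} (hs : s ≤ 1) : 0 ≤ tent s := by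
  rcases le_total s 0 with h₀ | h₀
  · rw [tent_of_nonpos h₀]
  rcases le_total s (1 / 2) with h₁ | h₁
  · rw [tent_of_le_half h₀ h₁]; linarith
  · rw [tent_of_half_le h₁]; linarith

theorem tent_iterate_mem_Icc {n : ℕ} (hn : 2 ≤ n) (s : ℝ) : tent^[n] s ∈ Set.Icc 0 1 := by
  obtain ⟨m, rfl⟩ : ∃ m, n = m + 1 + 1 := ⟨n - 2, by omega⟩
  rw [iterate_succ_apply', iterate_succ_apply']
  exact ⟨tent_nonneg (tent_le_one _), tent_le_one _⟩

theorem tent_iterate_eq_of_mem_Icc {n k : ℕ} (hk : k < 2 ^ n) {x : ℝ}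
    (hx : 2 ^ n * x ∈ Set.Icc (k : ℝ) (k + 1)) :
    tent^[n] x = if Even k then 2 ^ n * x - k else k + 1 - 2 ^ n * x := by
  induction n generalizing k x with
  | zero =>
    obtain rfl : k = 0 := by omega
    simp
  | succ n ih =>
    have h2n : (0 : ℝ) < 2 ^ n := by positivity
    obtain ⟨h₁, h₂⟩ := hx
    rw [pow_succ] at h₁ h₂ hk ⊢
    rw [iterate_succ_apply]
    by_cases hkn : k < 2 ^ n
    · have hkn' : (k : ℝ) + 1 ≤ 2 ^ n := by exact_mod_cast hkn
      have hx₀ : 0 ≤ x := by nlinarith [(k.cast_nonneg : (0 : ℝ) ≤ k)]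
      have hx₁ : x ≤ 1 / 2 := by nlinarith
      rw [tent_of_le_half hx₀ hx₁, ih hkn ⟨by linarith, by linarith⟩]
      ring_nf
    · -- on the right half, `tent x = 2 - 2 * x` lies in the slab `k'` of level `n`,
      -- whose parity is opposite to that of `k`
      obtain ⟨k', hkk'⟩ : ∃ k', k' + k + 1 = 2 ^ n * 2 := ⟨2 ^ n * 2 - 1 - k, by omega⟩
      have hkk'' : (k' : ℝ) + k + 1 = 2 ^ n * 2 := by exact_mod_cast hkk'
      have hkn' : (2 : ℝ) ^ n ≤ k := by exact_mod_cast not_lt.mp hkn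
      have hx : 1 / 2 ≤ x := by nlinarith
      have hpar : Even k' ↔ ¬ Even k := by rw [Nat.even_iff, Nat.even_iff]; omega
      rw [tent_of_half_le hx, ih (k := k') (by omega) ⟨by linarith, by linarith⟩]
      by_cases he : Even k
      · rw [if_pos he, if_neg (hpar.not.mpr (not_not.mpr he))]; linarith
      · rw [if_neg he, if_pos (hpar.mpr he)]; linarith

theorem tent_iterate_injOn {n k : ℕ} (hk : k < 2 ^ n) :
    InjOn (tent^[n]) {x | 2 ^ n * x ∈ Set.Icc (k : ℝ) (k + 1)} := by
  intro x hx y hy hxy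
  rw [tent_iterate_eq_of_mem_Icc hk hx, tent_iterate_eq_of_mem_Icc hk hy] at hxy
  refine mul_left_cancel₀ (pow_ne_zero n two_ne_zero) ?_
  split_ifs at hxy <;> linarith

theorem tent_iterate_eq_zero_or_one {n k : ℕ} (hk : k < 2 ^ n) {x : ℝ}
    (hx : 2 ^ n * x = k ∨ 2 ^ n * x = k + 1) : tent^[n] x = 0 ∨ tent^[n] x = 1 := by
  have hmem : 2 ^ n * x ∈ Set.Icc (k : ℝ) (k + 1) := by
    rcases hx with hx | hx <;> rw [hx] <;> constructor <;> linarith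
  rw [tent_iterate_eq_of_mem_Icc hk hmem]
  rcases hx with hx | hx <;> split_ifs <;> rw [hx] <;> norm_num

theorem not_isLocallyAffineAt_tent_iterate {n k : ℕ} (hn : 2 ≤ n) (hk : k < 2 ^ n) {p : ℝ}
    (hp : 2 ^ n * p = k ∨ 2 ^ n * p = k + 1) : ¬ IsLocallyAffineAt (tent^[n]) p := by
  rintro ⟨α, β, h⟩
  obtain ⟨ε, hε, hball⟩ := Metric.eventually_nhds_iff.mp h
  set δ := min (ε / 2) (1 / 2 ^ n)
  have hδ : 0 < δ := by positivity
  have hδε : δ < ε := (min_le_left _ _).trans_lt (half_lt_self hε)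
  have hδn : 2 ^ n * δ ≤ 1 := (le_div_iff₀' (by positivity)).mp (min_le_right _ _)
  have hmid : tent^[n] (p - δ) + tent^[n] (p + δ) = 2 * tent^[n] p := by
    rw [hball (by simpa [Real.dist_eq, abs_of_pos hδ] using hδε),
      hball (by simpa [Real.dist_eq, abs_of_pos hδ] using hδε), hball (by simpa using hε)]
    ring
  -- `tent^[n] p` is an extreme value of `tent^[n]`, so the midpoint identity forces equality
  have hside : tent^[n] (p + δ) = tent^[n] p ∧ tent^[n] (p - δ) = tent^[n] p := by
    obtain ⟨h₁, h₁'⟩ := tent_iterate_mem_Icc hn (p + δ)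
    obtain ⟨h₂, h₂'⟩ := tent_iterate_mem_Icc hn (p - δ)
    rcases tent_iterate_eq_zero_or_one hk hp with h | h <;> rw [h] at hmid ⊢ <;>
      exact ⟨by linarith, by linarith⟩
  have hδ' : 0 < 2 ^ n * δ := by positivity
  rcases hp with hp | hp
  · have := tent_iterate_injOn hk (x₁ := p + δ) (x₂ := p) ⟨by linarith, by linarith⟩
      ⟨by linarith, by linarith⟩ hside.1
    linarith
  · have := tent_iterate_injOn hk (x₁ := p - δ) (x₂ := p) ⟨by linarith, by linarith⟩
      ⟨by linarith, by linarith⟩ hside.2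
    linarith

theorem isLinearRegion_tent_iterate_slab {nx m n k : ℕ} (j : Fin nx) (u : Fin m) (hn : 2 ≤ n)
    (hk : k < 2 ^ n) :
    IsLinearRegion (fun x (_ : Fin m) => tent^[n] (x j))
      ((fun x => x j) ⁻¹' Set.Ioo (k / 2 ^ n) ((k + 1) / 2 ^ n)) := by
  have h2n : (0 : ℝ) < 2 ^ n := by positivity
  have hslab : ∀ s ∈ Set.Ioo ((k : ℝ) / 2 ^ n) ((k + 1) / 2 ^ n),
      2 ^ n * s ∈ Set.Icc (k : ℝ) (k + 1) := fun s hs =>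
    ⟨(div_le_iff₀' h2n).mp hs.1.le, (le_div_iff₀' h2n).mp hs.2.le⟩
  obtain ⟨α, β, hαβ⟩ : ∃ α β : ℝ,
      EqOn (tent^[n]) (fun s => α * s + β) (Set.Ioo (k / 2 ^ n) ((k + 1) / 2 ^ n)) := by
    by_cases he : Even k
    · refine ⟨2 ^ n, -k, fun s hs => ?_⟩
      rw [tent_iterate_eq_of_mem_Icc hk (hslab s hs), if_pos he]; ring
    · refine ⟨-2 ^ n, k + 1, fun s hs => ?_⟩
      rw [tent_iterate_eq_of_mem_Icc hk (hslab s hs), if_neg he]; ring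
  exact isLinearRegion_ridge j u (div_lt_div_of_pos_right (lt_add_one _) h2n) hαβ
    (not_isLocallyAffineAt_tent_iterate hn hk (.inl (mul_div_cancel₀ _ h2n.ne')))
    (not_isLocallyAffineAt_tent_iterate hn hk (.inr (mul_div_cancel₀ _ h2n.ne')))

theorem tent_eq_dotProduct_reluVec {M : ℕ} {i₀ i₁ : Fin M} (h : i₀ ≠ i₁) (s : ℝ) :
    (Pi.single i₀ 2 + Pi.single i₁ (-4)) ⬝ᵥ
      reluVec (s • (Pi.single i₀ 1 + Pi.single i₁ 1) + Pi.single i₁ (-1 / 2)) = tent s := by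
  simp [add_dotProduct, single_dotProduct, reluVec, h, h.symm, tent, ← sub_eq_add_neg, neg_div]

noncomputable def tentNet {nx nu M L : ℕ} (j : Fin nx) (i₀ i₁ : Fin M) :
    ReLUNetParams nx nu M L :=
  .rankOne (Pi.single j 1) (Pi.single i₀ 1 + Pi.single i₁ 1) (Pi.single i₁ (-1 / 2))
    (Pi.single i₀ 2 + Pi.single i₁ (-4))

theorem eval_tentNet {nx nu M L : ℕ} (j : Fin nx) {i₀ i₁ : Fin M} (h : i₀ ≠ i₁) :
    (tentNet j i₀ i₁ : ReLUNetParams nx nu M (L + 1)).eval = fun x _ => tent^[L + 1] (x j) := by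
  ext x
  rw [tentNet, ReLUNetParams.eval_rankOne, single_dotProduct, one_mul,
    funext (tent_eq_dotProduct_reluVec h)]

theorem eventually_add_mul_lt_two_pow (a b : ℝ) : ∀ᶠ n : ℕ in atTop, a + b * n < 2 ^ n := by
  have hlim : Tendsto (fun n : ℕ => a * 2⁻¹ ^ n + b * (n / 2 ^ n)) atTop (𝓝 (a * 0 + b * 0)) :=
    ((tendsto_pow_atTop_nhds_zero_of_lt_one (by norm_num) (by norm_num)).const_mul a).add
      (by simpa using (tendsto_pow_const_div_const_pow_of_one_lt 1 one_lt_two).const_mul b)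
  filter_upwards [hlim.eventually (gt_mem_nhds (by norm_num : a * 0 + b * 0 < 1))] with n hn
  calc a + b * n = (a * 2⁻¹ ^ n + b * (n / 2 ^ n)) * 2 ^ n := by
        rw [inv_pow]; field_simp
    _ < 2 ^ n := mul_lt_of_lt_one_left (by positivity) hn

theorem pairwise_disjoint_Ioo_div_two_pow (n : ℕ) :
    Pairwise (Disjoint on fun k : ℕ => Set.Ioo ((k : ℝ) / 2 ^ n) ((k + 1) / 2 ^ n)) := by
  intro i j hij
  have h := (Set.pairwise_disjoint_Ioo_intCast ℝ (Nat.cast_injective.ne hij)).preimage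
    (fun x : ℝ => 2 ^ n * x)
  simpa [Set.preimage_const_mul_Ioo₀ _ _ (by positivity : (0 : ℝ) < 2 ^ n)] using h

theorem regions_outgrow_parameters_general (nx nu M : ℕ)
    (hnx : 1 ≤ nx) (hnu : 1 ≤ nu) (hM : 2 * nx ≤ M) (C : ℝ) :
    ∃ L : ℕ, 1 ≤ L ∧
      ∃ (θ : ReLUNetParams nx nu M L) (k : ℕ) (S : Fin k → Set (Fin nx → ℝ)),
        (∀ i j, i ≠ j → Disjoint (S i) (S j)) ∧
        (∀ i, IsLinearRegion θ.eval (S i)) ∧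
        C * ((nx + 1) * M + (L - 1) * (M + 1) * M + (M + 1) * nu : ℝ) < (k : ℝ) := by
  obtain ⟨L, hcount, hL⟩ := ((eventually_add_mul_lt_two_pow (C * ((nx + 1) * M + (M + 1) * nu))
    (C * ((M + 1) * M))).and (eventually_ge_atTop 1)).exists
  let j : Fin nx := ⟨0, hnx⟩
  refine ⟨L + 1, by omega, tentNet j ⟨0, by omega⟩ ⟨1, by omega⟩, 2 ^ (L + 1),
    fun k => (fun x => x j) ⁻¹' Set.Ioo (k / 2 ^ (L + 1)) ((k + 1) / 2 ^ (L + 1)),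
    fun k k' hkk' => (pairwise_disjoint_Ioo_div_two_pow _ (Fin.val_injective.ne hkk')).preimage _,
    fun k => ?_, ?_⟩
  · rw [eval_tentNet j (by simp)]
    exact isLinearRegion_tent_iterate_slab j ⟨0, hnu⟩ (by omega) k.isLt
  · have : (2 : ℝ) ^ L < 2 ^ (L + 1) := pow_lt_pow_right₀ one_lt_two (lt_add_one L)
    push_cast
    linarith

/-- the number of linear regions of deep ReLU networks of fixed width
`M ≥ 2 nx` can exceed any constant multiple of the number of parameters. -/
theorem regions_outgrow_parameters (nx nu M : ℕ)
    (hnx : 1 ≤ nx) (hnu : 1 ≤ nu) (hM : 2 * nx ≤ M) (C : ℝ) (hC : 0 < C) :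
    ∃ L : ℕ, 1 ≤ L ∧
      ∃ (θ : ReLUNetParams nx nu M L) (k : ℕ) (S : Fin k → Set (Fin nx → ℝ)),
        (∀ i j, i ≠ j → Disjoint (S i) (S j)) ∧
        (∀ i, IsLinearRegion θ.eval (S i)) ∧
        C * ((nx + 1) * M + (L - 1) * (M + 1) * M + (M + 1) * nu : ℝ) < (k : ℝ) :=
  regions_outgrow_parameters_general nx nu M hnx hnu hM C
end
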